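/- arXiv:math/0403021 — 2 statements merged into one kernel-verified Lean document; each statement's English description precedes it below -/
import Mathlib

section
/- Let k be a field and let A be a quantum graded algebra with a straightening law on a finite poset (Π, ≤st). Then the Gelfand–Kirillov dimension of A equals rk Π, the rank of the poset Π. -/
/-- A *quantum graded algebra with a straightening law* over the field `k`, on the finite
poset `ι` (whose elements are realised in `A` via the map `elem`). -/
structure QuantumGradedASL (k : Type*) [Field k] (A : Type*) [Ring A] [Algebra k A]
    (𝒜 : ℕ → Submodule k A) (ι : Type*) [PartialOrder ι] [Finite ι] where
  /-- the map realising the elements of the poset `Π = ι` as elements of `A` -/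
  elem : ι → A
  /-- `A` is an `ℕ`-graded `k`-algebra with grading `𝒜` -/
  graded : GradedAlgebra 𝒜
  /-- (1) the elements of `Π` are homogeneous of positive degree -/
  homog : ∀ i : ι, ∃ d : ℕ, 0 < d ∧ elem i ∈ 𝒜 d
  /-- (2) the elements of `Π` generate `A` as a `k`-algebra -/
  gen : Algebra.adjoin k (Set.range elem) = ⊤
  /-- (3) the standard monomials (products of the `elem i` along nondecreasing lists,
  the empty product being `1`) form a linearly independent family -/
  indep : LinearIndependent k
    (fun l : {l : List ι // l.Chain' (· ≤ ·)} => ((l : List ι).map elem).prod)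
  /-- (4) if `a`, `b` are incomparable then `elem a * elem b` is a linear combination of
  terms `elem lam` or `elem lam * elem mu` with `lam ≤ mu`, `lam < a` and `lam < b` -/
  straighten : ∀ a b : ι, ¬ a ≤ b → ¬ b ≤ a →
    elem a * elem b ∈ Submodule.span k {x : A | ∃ lam : ι, lam < a ∧ lam < b ∧
      (x = elem lam ∨ ∃ mu : ι, lam ≤ mu ∧ x = elem lam * elem mu)}
  /-- (5) for all `a`, `b` there is `0 ≠ c ∈ k` such that `elem a * elem b - c • (elem b * elem a)`
  is a linear combination of terms `elem lam` or `elem lam * elem mu` with `lam ≤ mu`,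
  `lam < a` and `lam < b` -/
  comm : ∀ a b : ι, ∃ c : k, c ≠ 0 ∧
    elem a * elem b - c • (elem b * elem a) ∈
      Submodule.span k {x : A | ∃ lam : ι, lam < a ∧ lam < b ∧
        (x = elem lam ∨ ∃ mu : ι, lam ≤ mu ∧ x = elem lam * elem mu)}

/-- The rank of the finite poset `ι`: the maximal number of elements in a chain
`π₁ <st π₂ <st ⋯ <st π_s` of `ι` (`0` if `ι` is empty). -/
noncomputable def posetRank (ι : Type*) [PartialOrder ι] : ℕ :=
  sSup {s : ℕ | ∃ f : Fin s → ι, StrictMono f}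

/-- The Gelfand–Kirillov dimension of `A` computed from the finite-dimensional generating
subspace `V` (containing `1`): `GKdim A = limsup_{s → ∞} log_s (dim_k V^s)`. -/
noncomputable def gkDim (k : Type*) [Field k] {A : Type*} [Ring A] [Algebra k A]
    (V : Submodule k A) : ℝ :=
  Filter.atTop.limsup fun s : ℕ => Real.logb s (Module.finrank k ↥(V ^ s))

/-!
Each straightening relation (4), (5) rewrites a product of generators `p * (a * b) * q` with
`a ≰ b` as a combination of products whose words are smaller for the shortlex order induced by
`<st`, which is well founded because `Π` is finite. Hence `V ^ s`, for `V` spanned by `1` and `Π`,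
is spanned, and by (3) freely, by the standard monomials of length `≤ s`, i.e. by the sorted words
of length `≤ s`. A sorted word is determined by the chain of its distinct letters (at most
`rk Π` of them) together with their multiplicities, and the words supported on a maximal chain
already give `(s / rk Π + 1) ^ rk Π` of them; so `dim V ^ s` is squeezed between two multiples
of `s ^ rk Π`, and `log_s (dim V ^ s) → rk Π`.
-/

open Filter Topology

theorem List.exists_eq_append_cons_cons_of_not_isChain {α : Type*} {R : α → α → Prop} :
    ∀ {l : List α}, ¬ l.IsChain R → ∃ p a b q, l = p ++ a :: b :: q ∧ ¬ R a b
  | [], hl => absurd List.isChain_nil hl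
  | [a], hl => absurd (List.isChain_singleton a) hl
  | a :: b :: l, hl => by
    by_cases hab : R a b
    · obtain ⟨p, x, y, q, hl', hxy⟩ :=
        exists_eq_append_cons_cons_of_not_isChain fun h => hl (h.cons_cons hab)
      exact ⟨a :: p, x, y, q, by rw [hl', List.cons_append], hxy⟩
    · exact ⟨[], a, b, l, rfl, hab⟩

theorem List.shortlex_cons_cons_of_rel {α : Type*} {r : α → α → Prop} {x a : α} (h : r x a)
    (y b : α) (q : List α) : List.Shortlex r (x :: y :: q) (a :: b :: q) :=
  List.Shortlex.of_lex rfl (List.Lex.rel h)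

section PosetRank

variable {ι : Type*} [PartialOrder ι] [Finite ι]

theorem bddAbove_lengths_strictMono_fin :
    BddAbove {s : ℕ | ∃ f : Fin s → ι, StrictMono f} :=
  ⟨Nat.card ι, fun _ ⟨f, hf⟩ => by simpa using Nat.card_le_card_of_injective f hf.injective⟩

theorem le_posetRank_of_strictMono {m : ℕ} {f : Fin m → ι} (hf : StrictMono f) :
    m ≤ posetRank ι :=
  le_csSup bddAbove_lengths_strictMono_fin ⟨f, hf⟩

theorem exists_strictMono_fin_posetRank : ∃ f : Fin (posetRank ι) → ι, StrictMono f :=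
  Nat.sSup_mem (s := {s : ℕ | ∃ f : Fin s → ι, StrictMono f})
    ⟨0, finZeroElim, fun a => a.elim0⟩ bddAbove_lengths_strictMono_fin

theorem List.length_dedup_le_posetRank [DecidableEq ι] {l : List ι} (hl : l.IsChain (· ≤ ·)) :
    l.dedup.length ≤ posetRank ι := by
  have hle : l.dedup.Pairwise (· ≤ ·) :=
    (List.isChain_iff_pairwise.mp hl).sublist (List.dedup_sublist l)
  have hlt : l.dedup.Pairwise (· < ·) :=
    (hle.and (List.nodup_dedup l)).imp fun h => lt_of_le_of_ne h.1 h.2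
  exact le_posetRank_of_strictMono fun _ _ hij => List.pairwise_iff_get.mp hlt _ _ hij

end PosetRank

section SortedLists

variable {ι : Type*} [PartialOrder ι]

def sortedLists (ι : Type*) [PartialOrder ι] (s : ℕ) : Set (List ι) :=
  {l | l.IsChain (· ≤ ·) ∧ l.length ≤ s}

theorem sortedLists_mono : Monotone (sortedLists ι) :=
  fun _ _ hst _ hl => ⟨hl.1, hl.2.trans hst⟩

instance [Finite ι] (s : ℕ) : Finite (sortedLists ι s) :=
  ((List.finite_length_le ι s).subset fun _ hl => hl.2).to_subtype

variable [Finite ι]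

theorem pow_le_card_sortedLists (s : ℕ) :
    (s / posetRank ι + 1) ^ posetRank ι ≤ Nat.card (sortedLists ι s) := by
  classical
  set r := posetRank ι
  obtain ⟨f, hf⟩ := exists_strictMono_fin_posetRank (ι := ι)
  -- the word `f 0 ^ m 0 ⋯ f (r-1) ^ m (r-1)` along a maximal chain
  let L : (Fin r → Fin (s / r + 1)) → List ι :=
    fun m => (List.ofFn fun j => List.replicate (m j) (f j)).flatten
  have hsorted (m) : (L m).IsChain (· ≤ ·) := by
    refine List.isChain_iff_pairwise.mpr (List.pairwise_flatten.mpr ⟨?_, ?_⟩)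
    · simp only [List.mem_ofFn, forall_exists_index]
      rintro _ j rfl
      exact List.pairwise_replicate.mpr (Or.inr le_rfl)
    · refine List.pairwise_ofFn.mpr fun i j hij x hx y hy => ?_
      rw [List.eq_of_mem_replicate hx, List.eq_of_mem_replicate hy]
      exact (hf hij).le
  have hlength (m) : (L m).length ≤ s :=
    calc (L m).length = ∑ j, (m j : ℕ) := by simp [L, List.sum_ofFn]
      _ ≤ ∑ _j : Fin r, s / r := Finset.sum_le_sum fun j _ => Nat.le_of_lt_succ (m j).isLt
      _ = r * (s / r) := by simp
      _ ≤ s := Nat.mul_div_le s r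
  have hcount (m) (j : Fin r) : (L m).count (f j) = m j := by
    simp [L, List.count_flatten, List.sum_ofFn, List.count_replicate, hf.injective.eq_iff,
      Finset.sum_ite_eq']
  have hinj : Function.Injective fun m => (⟨L m, hsorted m, hlength m⟩ : sortedLists ι s) :=
    fun m₁ m₂ h => funext fun j => Fin.ext <| by
      rw [← hcount m₁ j, ← hcount m₂ j]
      exact congrArg (fun l : sortedLists ι s => l.1.count (f j)) h
  simpa using Nat.card_le_card_of_injective _ hinj

theorem card_sortedLists_le (s : ℕ) :
    Nat.card (sortedLists ι s) ≤ (Nat.card ι * (s + 1) + 1) ^ posetRank ι := by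
  classical
  set r := posetRank ι
  -- a sorted list is recorded by its distinct entries, in order, with their multiplicities
  let Φ : sortedLists ι s → Fin r → Option (ι × Fin (s + 1)) := fun l j =>
    l.1.dedup[(j : ℕ)]?.map fun i =>
      (i, ⟨l.1.count i, Nat.lt_succ_of_le (List.count_le_length.trans l.2.2)⟩)
  have hcount {l₁ l₂ : sortedLists ι s} (h : Φ l₁ = Φ l₂) {i : ι} (hi : i ∈ l₁.1) :
      l₁.1.count i = l₂.1.count i := by
    obtain ⟨j, hj, rfl⟩ := List.mem_iff_getElem.mp (List.mem_dedup.mpr hi)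
    have hjr : j < r := hj.trans_le (List.length_dedup_le_posetRank l₁.2.1)
    have := congrFun h ⟨j, hjr⟩
    simp only [Φ, List.getElem?_eq_getElem hj, Option.map_some, eq_comm (a := some _),
      Option.map_eq_some_iff, Prod.mk.injEq, Fin.mk.injEq] at this
    obtain ⟨i', -, rfl, hc⟩ := this
    exact hc.symm
  have hinj : Function.Injective Φ := by
    intro l₁ l₂ h
    refine Subtype.ext <| List.Perm.eq_of_pairwise' (List.isChain_iff_pairwise.mp l₁.2.1)
      (List.isChain_iff_pairwise.mp l₂.2.1) (List.perm_iff_count.mpr fun i => ?_)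
    by_cases hi₁ : i ∈ l₁.1
    · exact hcount h hi₁
    by_cases hi₂ : i ∈ l₂.1
    · exact (hcount h.symm hi₂).symm
    rw [List.count_eq_zero_of_not_mem hi₁, List.count_eq_zero_of_not_mem hi₂]
  calc Nat.card (sortedLists ι s) ≤ Nat.card (Fin r → Option (ι × Fin (s + 1))) :=
        Nat.card_le_card_of_injective Φ hinj
    _ = (Nat.card ι * (s + 1) + 1) ^ r := by simp [Nat.card_fun]

theorem pow_le_posetRank_pow_mul_card_sortedLists (s : ℕ) :
    s ^ posetRank ι ≤ posetRank ι ^ posetRank ι * Nat.card (sortedLists ι s) := by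
  set r := posetRank ι
  calc s ^ r ≤ (r * (s / r + 1)) ^ r := by
        rcases Nat.eq_zero_or_pos r with hr | hr
        · simp [hr]
        · exact Nat.pow_le_pow_left (Nat.lt_mul_div_succ s hr).le r
    _ = r ^ r * (s / r + 1) ^ r := mul_pow _ _ _
    _ ≤ r ^ r * Nat.card (sortedLists ι s) := Nat.mul_le_mul_left _ (pow_le_card_sortedLists s)

theorem card_sortedLists_le_mul_pow {s : ℕ} (hs : 1 ≤ s) :
    Nat.card (sortedLists ι s) ≤ (2 * Nat.card ι + 1) ^ posetRank ι * s ^ posetRank ι := by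
  rw [← mul_pow]
  refine (card_sortedLists_le s).trans (Nat.pow_le_pow_left ?_ _)
  nlinarith

end SortedLists

open scoped Pointwise in
theorem Set.exists_list_of_mem_pow_insert_one_range {M ι : Type*} [Monoid M] {e : ι → M}
    {x : M} {s : ℕ} (hx : x ∈ (insert 1 (Set.range e)) ^ s) :
    ∃ l : List ι, l.length ≤ s ∧ (l.map e).prod = x := by
  induction s generalizing x with
  | zero => exact ⟨[], le_rfl, by simpa using hx.symm⟩
  | succ s ih =>
    obtain ⟨y, hy, z, hz, rfl⟩ := Set.mem_mul.mp (pow_succ (insert 1 (Set.range e)) s ▸ hx)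
    obtain ⟨l, hl, rfl⟩ := ih hy
    rcases hz with rfl | ⟨i, rfl⟩
    · exact ⟨l, hl.trans s.le_succ, (mul_one _).symm⟩
    · exact ⟨l ++ [i], by simpa using hl, by simp⟩

theorem Submodule.list_prod_map_mem_span_pow {k A ι : Type*} [CommSemiring k] [Semiring A]
    [Algebra k A] (e : ι → A) (l : List ι) :
    (l.map e).prod ∈ Submodule.span k (insert 1 (Set.range e)) ^ l.length := by
  induction l with
  | nil => simpa using Submodule.one_le.mp (le_refl (1 : Submodule k A))
  | cons i l ih =>
    rw [List.map_cons, List.prod_cons, List.length_cons, pow_succ']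
    exact Submodule.mul_mem_mul (Submodule.subset_span (Or.inr ⟨i, rfl⟩)) ih

namespace QuantumGradedASL

variable {k : Type*} [Field k] {A : Type*} [Ring A] [Algebra k A] {𝒜 : ℕ → Submodule k A}
  {ι : Type*} [PartialOrder ι] [Finite ι] (Q : QuantumGradedASL k A 𝒜 ι)

def standardSpan (s : ℕ) : Submodule k A :=
  Submodule.span k ((fun l : List ι => (l.map Q.elem).prod) '' sortedLists ι s)

theorem standardSpan_mono : Monotone Q.standardSpan :=
  fun _ _ hst => Submodule.span_mono (Set.image_mono (sortedLists_mono hst))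

theorem prod_mem_standardSpan (l : List ι) : (l.map Q.elem).prod ∈ Q.standardSpan l.length := by
  induction l using (List.Shortlex.wf (wellFounded_lt (α := ι))).induction with
  | _ l ih =>
    by_cases hl : l.IsChain (· ≤ ·)
    · exact Submodule.subset_span ⟨l, ⟨hl, le_rfl⟩, rfl⟩
    obtain ⟨p, a, b, q, rfl, hab⟩ := List.exists_eq_append_cons_cons_of_not_isChain hl
    let f : A →ₗ[k] A :=
      (LinearMap.mulLeft k (p.map Q.elem).prod).comp (LinearMap.mulRight k (q.map Q.elem).prod)
    have hf (m : List ι) : f (m.map Q.elem).prod = ((p ++ m ++ q).map Q.elem).prod := by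
      simp [f]
    have hsmaller (m : List ι) (hm : List.Shortlex (· < ·) (m ++ q) (a :: b :: q)) :
        f (m.map Q.elem).prod ∈ Q.standardSpan (p ++ a :: b :: q).length := by
      have hlen : (m ++ q).length ≤ (a :: b :: q).length :=
        (List.shortlex_def.mp hm).elim le_of_lt fun h => h.1.le
      rw [hf, List.append_assoc]
      exact Q.standardSpan_mono (by simpa using hlen) (ih _ (hm.append_left p))
    have hlower : Submodule.span k {x : A | ∃ lam : ι, lam < a ∧ lam < b ∧
        (x = Q.elem lam ∨ ∃ mu : ι, lam ≤ mu ∧ x = Q.elem lam * Q.elem mu)} ≤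
        (Q.standardSpan (p ++ a :: b :: q).length).comap f := by
      rw [Submodule.span_le]
      rintro x ⟨lam, hla, -, rfl | ⟨mu, -, rfl⟩⟩
      · simpa using hsmaller [lam] (List.Shortlex.of_length_lt (by simp))
      · simpa using hsmaller [lam, mu] (List.shortlex_cons_cons_of_rel hla mu b q)
    have hab' : ((p ++ a :: b :: q).map Q.elem).prod = f (Q.elem a * Q.elem b) := by
      simpa using (hf [a, b]).symm
    rw [hab']
    by_cases hba : b ≤ a
    · obtain ⟨c, -, hc⟩ := Q.comm a b
      have hba' := hsmaller [b, a] (List.shortlex_cons_cons_of_rel (hba.lt_of_not_ge hab) a b q)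
      simpa using add_mem (hlower hc) (Submodule.smul_mem _ c hba')
    · exact hlower (Q.straighten a b hab hba)

theorem span_pow_eq_standardSpan (s : ℕ) :
    Submodule.span k (insert 1 (Set.range Q.elem)) ^ s = Q.standardSpan s := by
  apply le_antisymm
  · rw [Submodule.span_pow, Submodule.span_le]
    intro x hx
    obtain ⟨l, hl, rfl⟩ := Set.exists_list_of_mem_pow_insert_one_range hx
    exact Q.standardSpan_mono hl (Q.prod_mem_standardSpan l)
  · rw [standardSpan, Submodule.span_le]
    rintro _ ⟨l, ⟨-, hl⟩, rfl⟩
    have h1 : 1 ≤ Submodule.span k (insert 1 (Set.range Q.elem)) :=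
      Submodule.one_le.mpr (Submodule.subset_span (Set.mem_insert _ _))
    exact pow_right_monotone h1 hl (Submodule.list_prod_map_mem_span_pow Q.elem l)

theorem finrank_standardSpan (s : ℕ) :
    Module.finrank k (Q.standardSpan s) = Nat.card (sortedLists ι s) := by
  have : Fintype (sortedLists ι s) := Fintype.ofFinite _
  let toSorted : sortedLists ι s → {l : List ι // l.IsChain (· ≤ ·)} := fun l => ⟨l.1, l.2.1⟩
  have hli : LinearIndependent k fun l : sortedLists ι s => (l.1.map Q.elem).prod :=
    Q.indep.comp toSorted fun _ _ h => Subtype.ext (congrArg Subtype.val h :)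
  rw [standardSpan, Set.image_eq_range, finrank_span_eq_card hli, Nat.card_eq_fintype_card]

end QuantumGradedASL

theorem tendsto_logb_of_le_rpow_of_rpow_le {c : ℕ → ℝ} {r C₁ C₂ : ℝ} (hC₁ : 0 < C₁)
    (hlow : ∀ᶠ s : ℕ in atTop, C₁ * (s : ℝ) ^ r ≤ c s)
    (hup : ∀ᶠ s : ℕ in atTop, c s ≤ C₂ * (s : ℝ) ^ r) :
    Tendsto (fun s : ℕ => Real.logb s (c s)) atTop (𝓝 r) := by
  have hlog : Tendsto (fun s : ℕ => Real.log s) atTop atTop :=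
    Real.tendsto_log_atTop.comp tendsto_natCast_atTop_atTop
  have hlim (C : ℝ) : Tendsto (fun s : ℕ => r + Real.log C / Real.log s) atTop (𝓝 r) := by
    simpa using tendsto_const_nhds.add (tendsto_const_nhds.div_atTop hlog)
  have hlogb {C : ℝ} (hC : C ≠ 0) {s : ℕ} (hs : 1 < s) :
      Real.logb s (C * (s : ℝ) ^ r) = r + Real.log C / Real.log s := by
    have hlogs : Real.log s ≠ 0 := (Real.log_pos (by exact_mod_cast hs)).ne'
    rw [Real.logb, Real.log_mul hC (by positivity), Real.log_rpow (by positivity)]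
    field_simp
    ring
  refine tendsto_of_tendsto_of_tendsto_of_le_of_le' (hlim C₁) (hlim C₂) ?_ ?_
  · filter_upwards [hlow, eventually_gt_atTop 1] with s hs hs1
    rw [← hlogb hC₁.ne' hs1]
    exact Real.logb_le_logb_of_le (by exact_mod_cast hs1) (by positivity) hs
  · filter_upwards [hlow, hup, eventually_gt_atTop 1] with s hs hs' hs1
    have hc : 0 < c s := lt_of_lt_of_le (by positivity) hs
    have hC₂ : C₂ ≠ 0 := by rintro rfl; linarith [hc.trans_le hs']
    rw [← hlogb hC₂ hs1]
    exact Real.logb_le_logb_of_le (by exact_mod_cast hs1) hc hs'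

/-- If `A` is a quantum graded algebra with a straightening law on the finite
poset `(Π, ≤st)` then the Gelfand–Kirillov dimension of `A` (computed from the generating
subspace spanned by `Π ∪ {1}`) equals `rk Π`, the rank of the poset `Π`. -/
theorem gkDim_eq_posetRank {k : Type*} [Field k] {A : Type*} [Ring A] [Algebra k A]
    {𝒜 : ℕ → Submodule k A} {ι : Type*} [PartialOrder ι] [Finite ι]
    (Q : QuantumGradedASL k A 𝒜 ι) :
    gkDim k (Submodule.span k (insert (1 : A) (Set.range Q.elem))) = (posetRank ι : ℝ) := by
  set r := posetRank ι
  have hdim (s : ℕ) : Module.finrank k ↥(Submodule.span k (insert 1 (Set.range Q.elem)) ^ s) =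
      Nat.card (sortedLists ι s) := by
    rw [Q.span_pow_eq_standardSpan, Q.finrank_standardSpan]
  have hr : (0 : ℝ) < (r : ℝ) ^ r := by exact_mod_cast Nat.pow_self_pos
  simp only [gkDim, hdim]
  refine (tendsto_logb_of_le_rpow_of_rpow_le (inv_pos.mpr hr)
    (C₂ := ((2 * Nat.card ι + 1) ^ r : ℕ)) ?_ ?_).limsup_eq
  · filter_upwards with s
    rw [Real.rpow_natCast, inv_mul_le_iff₀ hr]
    exact_mod_cast pow_le_posetRank_pow_mul_card_sortedLists s
  · filter_upwards [eventually_ge_atTop 1] with s hs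
    rw [Real.rpow_natCast]
    exact_mod_cast card_sortedLists_le_mul_pow hs
end

section
/- Let k be a field, let A be a quantum graded algebra with a straightening law on a finite poset (Π, ≤st), let Ω be a Π-ideal, and let p : A → A/⟨Ω⟩ be the canonical projection onto the quotient by the two-sided ideal generated by Ω. Then A/⟨Ω⟩ is a quantum graded algebra with a straightening law on the poset p(Π∖Ω), with the partial order inherited from (Π, ≤st) via the bijection Π∖Ω ≅ p(Π∖Ω). -/
/-!
Straightening `elem a * monomial l`, for a standard monomial `monomial l`, by induction on the
length of `l` and, for a fixed length, on `a` (the poset is finite, hence well-founded), rewrites it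
as a combination of standard monomials with at most one more factor whose first factor lies below
`a` and below every factor of `l`. Hence the standard monomials span `A`, and those whose first
factor lies in the `Π`-ideal `Ω` span a two-sided ideal; it is the ideal generated by `Ω`, i.e. the
kernel of `p`. This kernel is spanned by homogeneous elements, so the grading descends to `B`. The
standard monomials on `Π ∖ Ω` are independent modulo the kernel, and the relations (4), (5) of `A`
map to those of `B` because every term `elem λ` or `elem λ * elem μ` with `λ ∈ Ω` is killed by `p`.
-/

open Submodule

section Span

variable {R A : Type*} [CommSemiring R] [Semiring A] [Algebra R A]

theorem Submodule.mul_right_mem_span {S T : Set A} {x : A} (hx : x ∈ span R S) (y : A)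
    (h : ∀ s ∈ S, s * y ∈ span R T) : x * y ∈ span R T := by
  have hxy := mem_map_of_mem (f := LinearMap.mulRight R y) hx
  rw [map_span] at hxy
  exact span_le.mpr (by rintro _ ⟨s, hs, rfl⟩; exact h s hs) hxy

theorem Submodule.mul_left_mem_span {S T : Set A} {x : A} (hx : x ∈ span R S) (y : A)
    (h : ∀ s ∈ S, y * s ∈ span R T) : y * x ∈ span R T := by
  have hxy := mem_map_of_mem (f := LinearMap.mulLeft R y) hx
  rw [map_span] at hxy
  exact span_le.mpr (by rintro _ ⟨s, hs, rfl⟩; exact h s hs) hxy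

theorem Submodule.mul_mem_of_adjoin_eq_top {s : Set A} (hs : Algebra.adjoin R s = ⊤)
    {M : Submodule R A} (hM : ∀ a ∈ s, ∀ x ∈ M, a * x ∈ M) (u : A) {x : A} (hx : x ∈ M) :
    u * x ∈ M := by
  have hu : u ∈ Algebra.adjoin R s := hs ▸ Algebra.mem_top
  induction hu using Algebra.adjoin_induction generalizing x with
  | mem a ha => exact hM a ha x hx
  | algebraMap c => rw [← Algebra.smul_def]; exact M.smul_mem c hx
  | add u v _ _ hu hv => rw [add_mul]; exact add_mem (hu hx) (hv hx)
  | mul u v _ _ hu hv => rw [mul_assoc]; exact hu (hv hx)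

end Span

namespace DirectSum

section Homogeneous

variable {ι R M : Type*} [DecidableEq ι] [CommSemiring R] [AddCommMonoid M] [Module R M]
  (ℳ : ι → Submodule R M) [Decomposition ℳ]

theorem decompose_mem_span_of_homogeneous {S : Set M} (hS : ∀ s ∈ S, ∃ d, s ∈ ℳ d) {x : M}
    (hx : x ∈ span R S) (i : ι) : (decompose ℳ x i : M) ∈ span R S := by
  induction hx using Submodule.span_induction with
  | mem s hs =>
    obtain ⟨d, hd⟩ := hS s hs
    rcases eq_or_ne d i with rfl | hne
    · rw [decompose_of_mem_same ℳ hd]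
      exact subset_span hs
    · rw [decompose_of_mem_ne ℳ hd hne]
      exact zero_mem _
  | zero => simp
  | add x y _ _ hx hy => rw [decompose_add]; exact add_mem hx hy
  | smul c x _ hx => rw [decompose_smul]; exact smul_mem _ c hx

end Homogeneous

section Map

variable {ι R M N : Type*} [DecidableEq ι] [Ring R] [AddCommGroup M] [AddCommGroup N]
  [Module R M] [Module R N] (ℳ : ι → Submodule R M) (f : M →ₗ[R] N)

theorem coeAddMonoidHom_map_submoduleMap (x : ⨁ i, ℳ i) :
    DirectSum.coeAddMonoidHom (fun i => (ℳ i).map f)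
        (map (fun i => (f.submoduleMap (ℳ i)).toAddMonoidHom) x) =
      f (DirectSum.coeAddMonoidHom ℳ x) := by
  induction x using DirectSum.induction_on with
  | zero => simp
  | of i y => simp
  | add x y hx hy => simp [hx, hy]

theorem IsInternal.map_of_surjective [Decomposition ℳ] (hsurj : Function.Surjective f)
    (hker : ∀ x, f x = 0 → ∀ i, f (decompose ℳ x i) = 0) :
    IsInternal fun i => (ℳ i).map f := by
  set g := fun i => (f.submoduleMap (ℳ i)).toAddMonoidHom
  have hg : Function.Surjective (map g) :=
    (map_surjective g).mpr fun i => f.submoduleMap_surjective (ℳ i)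
  refine ⟨(injective_iff_map_eq_zero _).mpr fun y hy => ?_, fun b => ?_⟩
  · obtain ⟨x, rfl⟩ := hg y
    rw [coeAddMonoidHom_map_submoduleMap] at hy
    have hx := hker _ hy
    rw [show DirectSum.coeAddMonoidHom ℳ x = (decompose ℳ).symm x from rfl,
      Equiv.apply_symm_apply] at hx
    ext i
    simpa [g] using hx i
  · obtain ⟨a, rfl⟩ := hsurj b
    refine ⟨map g (decompose ℳ a), ?_⟩
    rw [coeAddMonoidHom_map_submoduleMap]
    exact congrArg f ((decompose ℳ).symm_apply_apply a)

end Map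

end DirectSum

section GradedAlgebra

variable {ι R A B : Type*} [DecidableEq ι] [AddMonoid ι] [CommRing R] [Ring A] [Ring B]
  [Algebra R A] [Algebra R B] (𝒜 : ι → Submodule R A) [GradedAlgebra 𝒜] (p : A →ₐ[R] B)

instance AlgHom.gradedMonoid_map : SetLike.GradedMonoid fun i => (𝒜 i).map p.toLinearMap where
  one_mem := ⟨1, SetLike.GradedOne.one_mem, map_one p⟩
  mul_mem := by
    rintro i j _ _ ⟨x, hx, rfl⟩ ⟨y, hy, rfl⟩
    exact ⟨x * y, SetLike.mul_mem_graded hx hy, map_mul p x y⟩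

noncomputable abbrev GradedAlgebra.ofSurjective (hsurj : Function.Surjective p)
    (hker : ∀ x, p x = 0 → ∀ i, p (DirectSum.decompose 𝒜 x i) = 0) :
    GradedAlgebra fun i => (𝒜 i).map p.toLinearMap :=
  { toDecomposition :=
      (DirectSum.IsInternal.map_of_surjective 𝒜 p.toLinearMap hsurj hker).chooseDecomposition }

end GradedAlgebra

namespace QuantumGradedASL

section Monomial

variable {A ι : Type*} [Monoid A]

def monomial (e : ι → A) (l : List ι) : A := (l.map e).prod

@[simp] lemma monomial_nil (e : ι → A) : monomial e [] = 1 := rfl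

@[simp] lemma monomial_cons (e : ι → A) (b : ι) (t : List ι) :
    monomial e (b :: t) = e b * monomial e t :=
  List.prod_cons

end Monomial

variable {k : Type*} [Field k] {A : Type*} [Ring A] [Algebra k A] {ι : Type*} [PartialOrder ι]

/-- `span k (lowerTerms elem a b)` is the span occurring in axioms (4) and (5). -/
def lowerTerms (e : ι → A) (a b : ι) : Set A :=
  {x | ∃ lam : ι, lam < a ∧ lam < b ∧ (x = e lam ∨ ∃ mu : ι, lam ≤ mu ∧ x = e lam * e mu)}

theorem map_span_lowerTerms_le {Ω : Set ι} (hΩ : IsLowerSet Ω) {B : Type*} [Ring B]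
    [Algebra k B] {p : A →ₐ[k] B} {e : ι → A} (h0 : ∀ b ∈ Ω, p (e b) = 0) (a b : {a // a ∉ Ω}) :
    (span k (lowerTerms e a b)).map p.toLinearMap ≤
      span k (lowerTerms (fun x : {a // a ∉ Ω} => p (e x)) a b) := by
  rw [map_span, span_le]
  rintro _ ⟨z, ⟨lam, hla, hlb, hz⟩, rfl⟩
  by_cases hlam : lam ∈ Ω
  · have hpz : p z = 0 := by rcases hz with rfl | ⟨mu, -, rfl⟩ <;> simp [h0 lam hlam]
    simp [hpz]
  · refine subset_span ⟨⟨lam, hlam⟩, hla, hlb, ?_⟩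
    rcases hz with rfl | ⟨mu, hlm, rfl⟩
    · exact Or.inl rfl
    · exact Or.inr ⟨⟨mu, fun hmu => hlam (hΩ hlm hmu)⟩, hlm, map_mul p _ _⟩

/-- Note the off-by-one: these monomials have at most `n + 1` factors. -/
def headedMonomials (e : ι → A) (n : ℕ) (s : Set ι) : Set A :=
  {x | ∃ b t, (b :: t).IsChain (· ≤ ·) ∧ t.length ≤ n ∧ b ∈ s ∧ x = monomial e (b :: t)}

lemma headedMonomials_mono {e : ι → A} {n n' : ℕ} {s s' : Set ι} (hn : n ≤ n') (hs : s ⊆ s') :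
    headedMonomials e n s ⊆ headedMonomials e n' s' := by
  rintro x ⟨b, t, hc, ht, hb, rfl⟩
  exact ⟨b, t, hc, ht.trans hn, hs hb, rfl⟩

lemma mem_lowerBounds_cons_cons {a b w : ι} {t : List ι} (hc : (b :: t).IsChain (· ≤ ·))
    (ha : w ≤ a) (hb : w ≤ b) : w ∈ lowerBounds {y | y ∈ a :: b :: t} := by
  intro y hy
  simp only [Set.mem_ofPred_eq, List.mem_cons] at hy
  rcases hy with rfl | rfl | hy
  · exact ha
  · exact hb
  · exact hb.trans (hc.rel_cons hy)

lemma lowerBounds_cons_subset {w : ι} {r : List ι} {s : Set ι} (hw : w ∈ lowerBounds s) :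
    lowerBounds {y | y ∈ w :: r} ⊆ lowerBounds s :=
  fun _ hz _ hy => (hz List.mem_cons_self).trans (hw hy)

variable {𝒜 : ℕ → Submodule k A} [Finite ι] (Q : QuantumGradedASL k A 𝒜 ι)

def StraightensAt (n : ℕ) (a : ι) : Prop :=
  ∀ l : List ι, l.length ≤ n → l.IsChain (· ≤ ·) →
    Q.elem a * monomial Q.elem l ∈
      span k (headedMonomials Q.elem n (lowerBounds {y | y ∈ a :: l}))

lemma elem_mul_monomial_nil_mem (n : ℕ) (a : ι) :
    Q.elem a * monomial Q.elem [] ∈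
      span k (headedMonomials Q.elem n (lowerBounds {y | y ∈ [a]})) :=
  subset_span ⟨a, [], List.isChain_singleton a, Nat.zero_le n, by simp [lowerBounds], by simp⟩

variable {Q}

lemma lowerTerms_mul_mem {m : ℕ} {a b : ι} {t : List ι} (ih : ∀ c, Q.StraightensAt m c)
    (iha : ∀ c < a, Q.StraightensAt (m + 1) c) (hc : (b :: t).IsChain (· ≤ ·))
    (ht : t.length ≤ m) :
    ∀ z ∈ lowerTerms Q.elem a b, z * monomial Q.elem t ∈
      span k (headedMonomials Q.elem (m + 1) (lowerBounds {y | y ∈ a :: b :: t})) := by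
  rintro z ⟨lam, hla, hlb, hz⟩
  have hlam := mem_lowerBounds_cons_cons hc hla.le hlb.le
  rcases hz with rfl | ⟨mu, -, rfl⟩
  · exact span_mono (headedMonomials_mono m.le_succ (lowerBounds_cons_subset hlam))
      (ih lam t ht hc.tail)
  · rw [mul_assoc]
    refine mul_left_mem_span (ih mu t ht hc.tail) _ ?_
    rintro _ ⟨b', t', hc', ht', -, rfl⟩
    exact span_mono (headedMonomials_mono le_rfl (lowerBounds_cons_subset hlam))
      (iha lam hla (b' :: t') (by simpa using ht') hc')

lemma elem_mul_monomial_mem_of_lt {m : ℕ} {a b : ι} {t : List ι}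
    (ih : ∀ c, Q.StraightensAt m c) (iha : ∀ c < a, Q.StraightensAt (m + 1) c) (hba : b < a)
    (hc : (b :: t).IsChain (· ≤ ·)) (ht : t.length ≤ m) :
    Q.elem a * monomial Q.elem (b :: t) ∈
      span k (headedMonomials Q.elem (m + 1) (lowerBounds {y | y ∈ a :: b :: t})) := by
  obtain ⟨c, -, hrel⟩ := Q.comm a b
  have expand : Q.elem a * monomial Q.elem (b :: t) =
      (Q.elem a * Q.elem b - c • (Q.elem b * Q.elem a)) * monomial Q.elem t
        + c • (Q.elem b * (Q.elem a * monomial Q.elem t)) := by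
    rw [monomial_cons, sub_mul, smul_mul_assoc, mul_assoc, mul_assoc, ← mul_assoc, sub_add_cancel]
  have hb := mem_lowerBounds_cons_cons hc hba.le le_rfl
  rw [expand]
  refine add_mem (mul_right_mem_span hrel _ (lowerTerms_mul_mem ih iha hc ht))
    (smul_mem _ c (mul_left_mem_span (ih a t ht hc.tail) _ ?_))
  rintro _ ⟨b', t', hc', ht', -, rfl⟩
  exact span_mono (headedMonomials_mono le_rfl (lowerBounds_cons_subset hb))
    (iha b hba (b' :: t') (by simpa using ht') hc')

lemma straightensAt_succ {m : ℕ} (ih : ∀ c, Q.StraightensAt m c) {a : ι}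
    (iha : ∀ c < a, Q.StraightensAt (m + 1) c) : Q.StraightensAt (m + 1) a := by
  rintro (_ | ⟨b, t⟩) hl hc
  · exact Q.elem_mul_monomial_nil_mem _ a
  have ht : t.length ≤ m := by simpa using hl
  by_cases hab : a ≤ b
  · exact subset_span ⟨a, b :: t, hc.cons_cons hab, hl,
      mem_lowerBounds_cons_cons hc le_rfl hab, (monomial_cons _ _ _).symm⟩
  by_cases hba : b ≤ a
  · exact elem_mul_monomial_mem_of_lt ih iha (lt_of_le_not_ge hba hab) hc ht
  rw [monomial_cons, ← mul_assoc]
  exact mul_right_mem_span (Q.straighten a b hab hba) _ (lowerTerms_mul_mem ih iha hc ht)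

variable (Q)

theorem straightensAt (n : ℕ) (a : ι) : Q.StraightensAt n a := by
  induction n generalizing a with
  | zero =>
    rintro (_ | _) hl -
    · exact Q.elem_mul_monomial_nil_mem 0 a
    · simp at hl
  | succ m ih =>
    induction a using WellFoundedLT.induction with
    | _ a iha => exact straightensAt_succ ih iha

theorem span_standardMonomials_eq_top :
    span k (monomial Q.elem '' {l | l.IsChain (· ≤ ·)}) = ⊤ := by
  have h1 : (1 : A) ∈ span k (monomial Q.elem '' {l | l.IsChain (· ≤ ·)}) :=
    subset_span ⟨[], List.isChain_nil, rfl⟩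
  refine eq_top_iff'.mpr fun u => mul_one u ▸ mul_mem_of_adjoin_eq_top Q.gen ?_ u h1
  rintro _ ⟨a, rfl⟩ x hx
  refine mul_left_mem_span hx _ ?_
  rintro _ ⟨l, hl, rfl⟩
  refine span_mono ?_ (Q.straightensAt l.length a l le_rfl hl)
  rintro _ ⟨b, t, hc, -, -, rfl⟩
  exact ⟨b :: t, hc, rfl⟩

lemma exists_monomial_mem (l : List ι) : ∃ d, monomial Q.elem l ∈ 𝒜 d := by
  let := Q.graded
  induction l with
  | nil => exact ⟨0, SetLike.GradedOne.one_mem⟩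
  | cons b t ih =>
    obtain ⟨d, -, hd⟩ := Q.homog b
    obtain ⟨d', hd'⟩ := ih
    exact ⟨d + d', SetLike.mul_mem_graded hd hd'⟩

def headedSpan (s : Set ι) : Submodule k A := span k (⋃ n, headedMonomials Q.elem n s)

variable {Q} {Ω : Set ι}

lemma elem_mem_headedSpan {b : ι} (hb : b ∈ Ω) : Q.elem b ∈ Q.headedSpan Ω :=
  subset_span (Set.mem_iUnion.mpr ⟨0, b, [], List.isChain_singleton b, le_rfl, hb, by simp⟩)

lemma decompose_mem_headedSpan [DirectSum.Decomposition 𝒜] {x : A} (hx : x ∈ Q.headedSpan Ω)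
    (i : ℕ) : (DirectSum.decompose 𝒜 x i : A) ∈ Q.headedSpan Ω := by
  refine DirectSum.decompose_mem_span_of_homogeneous 𝒜 (fun s hs => ?_) hx i
  obtain ⟨n, b, t, -, -, -, rfl⟩ := Set.mem_iUnion.mp hs
  exact Q.exists_monomial_mem (b :: t)

lemma elem_mul_mem_headedSpan (hΩ : IsLowerSet Ω) {a y : ι} {l : List ι}
    (hl : l.IsChain (· ≤ ·)) (hy : y ∈ a :: l) (hyΩ : y ∈ Ω) :
    Q.elem a * monomial Q.elem l ∈ Q.headedSpan Ω := by
  have hbelow : lowerBounds {y | y ∈ a :: l} ⊆ Ω := fun _ hz => hΩ (hz hy) hyΩ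
  exact span_mono ((headedMonomials_mono le_rfl hbelow).trans
      (Set.subset_iUnion (headedMonomials Q.elem · Ω) l.length))
    (Q.straightensAt l.length a l le_rfl hl)

lemma elem_mul_mem_headedSpan_of_mem (hΩ : IsLowerSet Ω) {b : ι} (hb : b ∈ Ω) (x : A) :
    Q.elem b * x ∈ Q.headedSpan Ω := by
  refine mul_left_mem_span (Q.span_standardMonomials_eq_top ▸ mem_top : x ∈ _) _ ?_
  rintro _ ⟨l, hl, rfl⟩
  exact elem_mul_mem_headedSpan hΩ hl List.mem_cons_self hb

lemma mul_mem_headedSpan (hΩ : IsLowerSet Ω) (u : A) {x : A} (hx : x ∈ Q.headedSpan Ω) :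
    u * x ∈ Q.headedSpan Ω := by
  refine mul_mem_of_adjoin_eq_top Q.gen ?_ u hx
  rintro _ ⟨a, rfl⟩ x hx
  refine mul_left_mem_span hx _ fun z hz => ?_
  obtain ⟨n, b, t, hc, -, hb, rfl⟩ := Set.mem_iUnion.mp hz
  exact elem_mul_mem_headedSpan hΩ hc (List.mem_cons_of_mem a List.mem_cons_self) hb

lemma twoSidedIdeal_span_subset_headedSpan (hΩ : IsLowerSet Ω) :
    (TwoSidedIdeal.span (Q.elem '' Ω) : Set A) ⊆ Q.headedSpan Ω := by
  intro x hx
  rw [SetLike.mem_coe, TwoSidedIdeal.mem_span_iff_mem_addSubgroup_closure] at hx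
  refine (AddSubgroup.closure_le (K := (Q.headedSpan Ω).toAddSubgroup)).mpr ?_ hx
  rintro _ ⟨_, ⟨u, -, _, ⟨b, hb, rfl⟩, rfl⟩, v, -, rfl⟩
  show u * Q.elem b * v ∈ Q.headedSpan Ω
  rw [mul_assoc]
  exact mul_mem_headedSpan hΩ u (elem_mul_mem_headedSpan_of_mem hΩ hb v)

variable {B : Type*} [Ring B] [Algebra k B]

lemma headedSpan_le_ker {p : A →ₐ[k] B} (h0 : ∀ b ∈ Ω, p (Q.elem b) = 0) :
    Q.headedSpan Ω ≤ LinearMap.ker p.toLinearMap := by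
  refine span_le.mpr fun x hx => ?_
  obtain ⟨n, b, t, -, -, hb, rfl⟩ := Set.mem_iUnion.mp hx
  simp [h0 b hb]

theorem ker_eq_headedSpan (hΩ : IsLowerSet Ω) {p : A →ₐ[k] B}
    (hker : (RingHom.ker (p : A →+* B) : Set A) = (TwoSidedIdeal.span (Q.elem '' Ω) : Set A)) :
    LinearMap.ker p.toLinearMap = Q.headedSpan Ω := by
  have h0 (b : ι) (hb : b ∈ Ω) : p (Q.elem b) = 0 := by
    have : Q.elem b ∈ (RingHom.ker (p : A →+* B) : Set A) :=
      hker ▸ TwoSidedIdeal.subset_span ⟨b, hb, rfl⟩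
    exact this
  refine le_antisymm (fun x hx => twoSidedIdeal_span_subset_headedSpan hΩ ?_)
    (headedSpan_le_ker h0)
  rw [← hker]
  exact hx

theorem linearIndependent_map_standardMonomials {p : A →ₐ[k] B}
    (hker : LinearMap.ker p.toLinearMap = Q.headedSpan Ω) :
    LinearIndependent k fun l : {l : List {a // a ∉ Ω} // l.IsChain (· ≤ ·)} =>
      ((l : List {a // a ∉ Ω}).map fun x : {a // a ∉ Ω} => p (Q.elem x)).prod := by
  let J (l : {l : List {a // a ∉ Ω} // l.IsChain (· ≤ ·)}) : {l : List ι // l.IsChain (· ≤ ·)} :=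
    ⟨l.1.map Subtype.val, List.isChain_map_of_isChain Subtype.val (fun _ _ h => h) l.2⟩
  have hJ : Function.Injective J := fun l l' h =>
    Subtype.ext (List.map_injective_iff.mpr Subtype.val_injective (congrArg Subtype.val h))
  have hdisj : Disjoint (span k (Set.range ((fun l => monomial Q.elem l.1) ∘ J)))
      (LinearMap.ker p.toLinearMap) := by
    rw [hker]
    refine (Q.indep.disjoint_span_image (s := {l | ∀ y ∈ l.1, y ∉ Ω})
      (t := {l | ∃ y ∈ l.1, y ∈ Ω}) ?_).mono (span_mono ?_) (span_le.mpr ?_)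
    · exact Set.disjoint_left.mpr fun l hl ⟨y, hy, hyΩ⟩ => hl y hy hyΩ
    · rintro _ ⟨l, rfl⟩
      refine ⟨J l, fun y hy => ?_, rfl⟩
      obtain ⟨z, -, rfl⟩ := List.mem_map.mp hy
      exact z.2
    · intro x hx
      obtain ⟨n, b, t, hc, -, hb, rfl⟩ := Set.mem_iUnion.mp hx
      exact subset_span ⟨⟨b :: t, hc⟩, ⟨b, List.mem_cons_self, hb⟩, rfl⟩
  have hfamily : (fun l : {l : List {a // a ∉ Ω} // l.IsChain (· ≤ ·)} =>
      ((l : List {a // a ∉ Ω}).map fun x : {a // a ∉ Ω} => p (Q.elem x)).prod) =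
      p.toLinearMap ∘ (fun l => monomial Q.elem l.1) ∘ J := by
    funext l
    simp [J, monomial, map_list_prod, List.map_map, Function.comp_def]
  rw [hfamily]
  exact (Q.indep.comp J hJ).map hdisj

theorem adjoin_range_map_elem_eq_top {p : A →ₐ[k] B} (hsurj : Function.Surjective p)
    (h0 : ∀ b ∈ Ω, p (Q.elem b) = 0) :
    Algebra.adjoin k (Set.range fun x : {a // a ∉ Ω} => p (Q.elem x)) = ⊤ := by
  rw [eq_top_iff, ← (AlgHom.range_eq_top p).mpr hsurj, ← Algebra.map_top, ← Q.gen,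
    AlgHom.map_adjoin, Algebra.adjoin_le_iff]
  rintro _ ⟨_, ⟨a, rfl⟩, rfl⟩
  by_cases ha : a ∈ Ω
  · rw [h0 a ha]
    exact zero_mem _
  · exact Algebra.subset_adjoin ⟨⟨a, ha⟩, rfl⟩

variable (Q) in
noncomputable def quotient (hΩ : IsLowerSet Ω) (p : A →ₐ[k] B) (hsurj : Function.Surjective p)
    (hker : LinearMap.ker p.toLinearMap = Q.headedSpan Ω) :
    QuantumGradedASL k B (fun i : ℕ => (𝒜 i).map p.toLinearMap) {a : ι // a ∉ Ω} :=
  letI := Q.graded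
  have h0 (b : ι) (hb : b ∈ Ω) : p (Q.elem b) = 0 := by
    have : Q.elem b ∈ LinearMap.ker p.toLinearMap := hker ▸ elem_mem_headedSpan hb
    exact this
  { elem := fun x => p (Q.elem x)
    graded := GradedAlgebra.ofSurjective 𝒜 p hsurj fun x hx i => by
      have : (DirectSum.decompose 𝒜 x i : A) ∈ LinearMap.ker p.toLinearMap :=
        hker ▸ decompose_mem_headedSpan (hker ▸ hx) i
      exact this
    homog := fun i => (Q.homog i).imp fun _ hd => ⟨hd.1, mem_map_of_mem hd.2⟩
    gen := adjoin_range_map_elem_eq_top hsurj h0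
    indep := linearIndependent_map_standardMonomials hker
    straighten := fun a b hab hba => by
      have := map_span_lowerTerms_le hΩ h0 a b (mem_map_of_mem (Q.straighten a b hab hba))
      rwa [AlgHom.toLinearMap_apply, map_mul] at this
    comm := fun a b => by
      obtain ⟨c, hc, hmem⟩ := Q.comm a b
      have := map_span_lowerTerms_le hΩ h0 a b (mem_map_of_mem hmem)
      rw [AlgHom.toLinearMap_apply, map_sub, map_smul, map_mul, map_mul] at this
      exact ⟨c, hc, this⟩ }

end QuantumGradedASL

/-- Let `A` be a quantum graded A.S.L. on the finite poset `(Π, ≤st)`, let `Ω`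
be a `Π`-ideal and let `p : A → A/⟨Ω⟩` be the canonical projection (modelled here by any
surjective `k`-algebra map `p` whose kernel is the two-sided ideal generated by `Ω`).  Then
`A/⟨Ω⟩`, with the induced grading, is a quantum graded A.S.L. on the poset `p(Π∖Ω) ≅ Π∖Ω`
with the inherited partial order. -/
theorem qasl_quotient_by_pi_ideal {k : Type*} [Field k] {A : Type*} [Ring A] [Algebra k A]
    {𝒜 : ℕ → Submodule k A} {ι : Type*} [PartialOrder ι] [Finite ι]
    (Q : QuantumGradedASL k A 𝒜 ι) (Ω : Set ι) (hΩ : IsLowerSet Ω)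
    (B : Type*) [Ring B] [Algebra k B] (p : A →ₐ[k] B)
    (hsurj : Function.Surjective p)
    (hker : (RingHom.ker (p : A →+* B) : Set A) = (TwoSidedIdeal.span (Q.elem '' Ω) : Set A)) :
    ∃ Q' : QuantumGradedASL k B (fun i : ℕ => (𝒜 i).map p.toLinearMap) {a : ι // a ∉ Ω},
      ∀ x : {a : ι // a ∉ Ω}, Q'.elem x = p (Q.elem (x : ι)) :=
  ⟨Q.quotient hΩ p hsurj (Q.ker_eq_headedSpan hΩ hker), fun _ => rfl⟩
end
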